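/- arXiv:2402.08435 — 5 statements merged into one kernel-verified Lean document; each statement's English description precedes it below -/
import Mathlib

section
/- For every i in ℤ, the weakly monotone operators satisfy the relation A_i A_i† + A_{i+1}† A_{i+1} = A_{i+1} A_{i+1}† as bounded operators on the weakly monotone Fock space. -/
open scoped ComplexOrder

/-- Index set for the orthonormal basis of the weakly monotone Fock space over `ℓ²(ℤ)`:
decreasing (finite) lists of integers; the empty list corresponds to the vacuum. -/
def WMIdx : Type := {l : List ℤ // l.Chain' (· ≥ ·)}

/-- `i` may be created on top of the tensor indexed by `l`. -/
def WMIdx.ok (i : ℤ) (l : WMIdx) : Prop := ∀ j ∈ l.1.head?, i ≥ j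

def WMIdx.cons (i : ℤ) (l : WMIdx) (h : WMIdx.ok i l) : WMIdx :=
  ⟨i :: l.1, List.isChain_cons.mpr ⟨h, l.2⟩⟩

def WMIdx.vac : WMIdx := ⟨[], List.isChain_nil⟩

/-!
`A_i A_i†` is the projection onto the span of the basis tensors `e_{i_1} ⊗ ⋯` with `i_1 ≤ i`
(including the vacuum), and `A_i† A_i` the projection onto those with `i_1 = i`. Since
`i_1 ≤ i + 1` splits into the disjoint cases `i_1 ≤ i` and `i_1 = i + 1`, the projections add up.
-/

open scoped InnerProductSpace

namespace HilbertBasis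

variable {ι 𝕜 E : Type*} [RCLike 𝕜] [NormedAddCommGroup E] [InnerProductSpace 𝕜 E]

theorem ext_inner_left (b : HilbertBasis ι 𝕜 E) {x y : E} (h : ∀ i, ⟪b i, x⟫_𝕜 = ⟪b i, y⟫_𝕜) :
    x = y :=
  b.repr.injective <| lp.ext <| funext fun i => by
    rw [b.repr_apply_apply, b.repr_apply_apply, h]

theorem ext_continuousLinearMap (b : HilbertBasis ι 𝕜 E) {f g : E →L[𝕜] E}
    (h : ∀ i, f (b i) = g (b i)) : f = g :=
  ContinuousLinearMap.ext_on (Submodule.dense_iff_topologicalClosure_eq_top.mpr b.dense_span)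
    (Set.forall_mem_range.mpr h)

end HilbertBasis

namespace WMIdx

theorem cons_inj (i : ℤ) {l m : WMIdx} (hl : ok i l) (hm : ok i m) :
    cons i l hl = cons i m hm ↔ l = m := by
  refine ⟨fun h => Subtype.ext ?_, fun h => by subst h; rfl⟩
  exact (List.cons.inj (congrArg Subtype.val h)).2

theorem exists_eq_cons_of_head?_eq {i : ℤ} {l : WMIdx} (h : l.1.head? = some i) :
    ∃ m hm, l = cons i m hm := by
  obtain ⟨_ | ⟨j, t⟩, hl⟩ := l
  · simp at h
  · obtain rfl : j = i := by simpa using h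
    exact ⟨⟨t, hl.tail⟩, (List.isChain_cons.mp hl).1, rfl⟩

theorem ok_succ_iff (i : ℤ) (l : WMIdx) : ok (i + 1) l ↔ ok i l ∨ l.1.head? = some (i + 1) := by
  rcases l with ⟨_ | ⟨j, t⟩, hl⟩
  · simp [ok]
  · simp only [ok, List.head?_cons, Option.mem_def, Option.some.injEq, forall_eq']
    omega

theorem not_ok_of_head?_eq {i : ℤ} {l : WMIdx} (h : l.1.head? = some (i + 1)) : ¬ ok i l :=
  fun hok => by have := hok (i + 1) h; omega

end WMIdx

section Creation

variable {H : Type} [NormedAddCommGroup H] [InnerProductSpace ℂ H] [CompleteSpace H]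
  {b : HilbertBasis WMIdx ℂ H} {C : ℤ → H →L[ℂ] H}

theorem adjoint_creation_apply_cons
    (hC : ∀ i l (h : WMIdx.ok i l), C i (b l) = b (WMIdx.cons i l h))
    (hC0 : ∀ i l, ¬ WMIdx.ok i l → C i (b l) = 0) (i : ℤ) (m : WMIdx) (hm : WMIdx.ok i m) :
    ContinuousLinearMap.adjoint (C i) (b (WMIdx.cons i m hm)) = b m := by
  classical
  refine b.ext_inner_left fun n => ?_
  rw [ContinuousLinearMap.adjoint_inner_right, orthonormal_iff_ite.mp b.orthonormal]
  by_cases hn : WMIdx.ok i n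
  · rw [hC i n hn, orthonormal_iff_ite.mp b.orthonormal, WMIdx.cons_inj]
  · rw [hC0 i n hn, inner_zero_left, if_neg]
    rintro rfl
    exact hn hm

theorem adjoint_creation_apply_of_head?_ne
    (hC : ∀ i l (h : WMIdx.ok i l), C i (b l) = b (WMIdx.cons i l h))
    (hC0 : ∀ i l, ¬ WMIdx.ok i l → C i (b l) = 0) (i : ℤ) (l : WMIdx) (hl : l.1.head? ≠ some i) :
    ContinuousLinearMap.adjoint (C i) (b l) = 0 := by
  classical
  refine b.ext_inner_left fun n => ?_
  rw [ContinuousLinearMap.adjoint_inner_right, inner_zero_right]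
  by_cases hn : WMIdx.ok i n
  · rw [hC i n hn, orthonormal_iff_ite.mp b.orthonormal, if_neg]
    rintro rfl
    exact hl rfl
  · rw [hC0 i n hn, inner_zero_left]

theorem adjoint_creation_comp_creation_apply
    (hC : ∀ i l (h : WMIdx.ok i l), C i (b l) = b (WMIdx.cons i l h))
    (hC0 : ∀ i l, ¬ WMIdx.ok i l → C i (b l) = 0) (i : ℤ) (l : WMIdx) [Decidable (WMIdx.ok i l)] :
    (ContinuousLinearMap.adjoint (C i)).comp (C i) (b l) = if WMIdx.ok i l then b l else 0 := by
  rw [ContinuousLinearMap.comp_apply]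
  split_ifs with hl
  · rw [hC i l hl, adjoint_creation_apply_cons hC hC0]
  · rw [hC0 i l hl, map_zero]

theorem creation_comp_adjoint_creation_apply
    (hC : ∀ i l (h : WMIdx.ok i l), C i (b l) = b (WMIdx.cons i l h))
    (hC0 : ∀ i l, ¬ WMIdx.ok i l → C i (b l) = 0) (i : ℤ) (l : WMIdx) :
    (C i).comp (ContinuousLinearMap.adjoint (C i)) (b l) =
      if l.1.head? = some i then b l else 0 := by
  rw [ContinuousLinearMap.comp_apply]
  split_ifs with hl
  · obtain ⟨m, hm, rfl⟩ := WMIdx.exists_eq_cons_of_head?_eq hl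
    rw [adjoint_creation_apply_cons hC hC0, hC i m hm]
  · rw [adjoint_creation_apply_of_head?_ne hC hC0 i l hl, map_zero]

end Creation

/-- `A_i A_i† + A_{i+1}† A_{i+1} = A_{i+1} A_{i+1}†`. -/
theorem wm_successor_relation {H : Type} [NormedAddCommGroup H] [InnerProductSpace ℂ H] [CompleteSpace H]
    (b : HilbertBasis WMIdx ℂ H) (C : ℤ → H →L[ℂ] H)
    (hC : ∀ i l (h : WMIdx.ok i l), C i (b l) = b (WMIdx.cons i l h))
    (hC0 : ∀ i l, ¬ WMIdx.ok i l → C i (b l) = 0)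
    (i : ℤ) :
    (ContinuousLinearMap.adjoint (C i)).comp (C i)
        + (C (i + 1)).comp (ContinuousLinearMap.adjoint (C (i + 1)))
      = (ContinuousLinearMap.adjoint (C (i + 1))).comp (C (i + 1)) := by
  classical
  refine b.ext_continuousLinearMap fun l => ?_
  rw [add_apply, adjoint_creation_comp_creation_apply hC hC0,
    creation_comp_adjoint_creation_apply hC hC0, adjoint_creation_comp_creation_apply hC hC0,
    WMIdx.ok_succ_iff]
  by_cases hhead : l.1.head? = some (i + 1)
  · simp [hhead, WMIdx.not_ok_of_head?_eq hhead]
  · by_cases hok : WMIdx.ok i l <;> simp [hok, hhead]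
end

section
/- The Cesàro averages (1/n) Σ_{k=0}^{n−1} A_{−k} A_{−k}† converge to P_Ω in the strong operator topology but not in operator norm; in particular, for every n, ‖P_Ω − (1/n) Σ_{k=0}^{n−1} A_{−k} A_{−k}†‖ ≥ 1. -/
open scoped ComplexOrder

/-!
With `C i` the creation operator, `(C i)† ∘L C i` is diagonal in the basis `b`: it is the projection
onto the span of the basis vectors on which `i` may be created. A basis vector other than the
vacuum, with top index `j`, leaves the range of `(C (-k))† ∘L C (-k)` as soon as `-k < j`, so
the diagonal entries converge pointwise to those of `P_Ω`; by Parseval and dominated convergence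
this is strong convergence, which Cesàro averaging preserves. The convergence is not uniform:
the basis vector `e_{-n}` is fixed by the first `n` projections, hence by their average, while
`P_Ω` kills it.
-/

open Filter Topology Finset
open scoped InnerProduct InnerProductSpace

namespace HilbertBasis

variable {ι 𝕜 E : Type*} [RCLike 𝕜] [NormedAddCommGroup E] [InnerProductSpace 𝕜 E]
  (b : HilbertBasis ι 𝕜 E)

theorem ext_inner {x y : E} (h : ∀ i, ⟪b i, x⟫_𝕜 = ⟪b i, y⟫_𝕜) : x = y :=
  b.repr.injective <| lp.ext <| funext fun i => by simpa only [b.repr_apply_apply] using h i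

theorem hasSum_norm_inner_sq (x : E) : HasSum (fun i => ‖⟪b i, x⟫_𝕜‖ ^ 2) (‖x‖ ^ 2) := by
  simpa [b.repr_apply_apply] using lp.hasSum_norm (p := 2) (by norm_num) (b.repr x)

theorem tendsto_apply_of_inner_eq_mul {α : Type*} {l : Filter α} {T : α → E →L[𝕜] E}
    {S : E →L[𝕜] E} {d : α → ι → 𝕜} {e : ι → 𝕜} {c : ℝ}
    (hT : ∀ a i x, ⟪b i, T a x⟫_𝕜 = d a i * ⟪b i, x⟫_𝕜)
    (hS : ∀ i x, ⟪b i, S x⟫_𝕜 = e i * ⟪b i, x⟫_𝕜)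
    (hbound : ∀ a i, ‖d a i - e i‖ ≤ c) (hlim : ∀ i, Tendsto (fun a => d a i) l (𝓝 (e i)))
    (x : E) : Tendsto (fun a => T a x) l (𝓝 (S x)) := by
  have hcoeff (a : α) (i : ι) : ⟪b i, T a x - S x⟫_𝕜 = (d a i - e i) * ⟪b i, x⟫_𝕜 := by
    rw [inner_sub_right, hT, hS, sub_mul]
  -- Parseval writes `‖T a x - S x‖ ^ 2` as a series dominated by `c ^ 2 * ‖⟪b i, x⟫‖ ^ 2`.
  have hsq : Tendsto (fun a => ‖T a x - S x‖ ^ 2) l (𝓝 0) := by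
    have key := tendsto_tsum_of_dominated_convergence (𝓕 := l)
      (f := fun a i => ‖⟪b i, T a x - S x⟫_𝕜‖ ^ 2) (g := 0)
      (bound := fun i => c ^ 2 * ‖⟪b i, x⟫_𝕜‖ ^ 2)
      ((b.hasSum_norm_inner_sq x).summable.mul_left _) (fun i => ?_) (.of_forall fun a i => ?_)
    · simpa [(b.hasSum_norm_inner_sq _).tsum_eq] using key
    · simp_rw [hcoeff, norm_mul, mul_pow]
      simpa using (((hlim i).sub_const (e i)).norm.pow 2).mul_const (‖⟪b i, x⟫_𝕜‖ ^ 2)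
    · rw [hcoeff, norm_pow, norm_norm, norm_mul, mul_pow]
      gcongr
      exact hbound a i
  rw [tendsto_iff_norm_sub_tendsto_zero]
  simpa using hsq.sqrt

theorem inner_smulRight_innerSL_apply [DecidableEq ι] (i j : ι) (x : E) :
    ⟪b j, (innerSL 𝕜 (b i)).smulRight (b i) x⟫_𝕜 = (if j = i then 1 else 0) * ⟪b j, x⟫_𝕜 := by
  rw [ContinuousLinearMap.smulRight_apply, innerSL_apply_apply, inner_smul_right,
    orthonormal_iff_ite.mp b.orthonormal]
  split_ifs with h
  · rw [h, mul_one, one_mul]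
  · rw [mul_zero, zero_mul]

section PartialIsometry

variable [CompleteSpace E] {p : ι → Prop} {σ : ∀ i, p i → ι} {C : E →L[𝕜] E}
  (hσ : ∀ i j hi hj, σ i hi = σ j hj → i = j)
  (hC : ∀ i (hi : p i), C (b i) = b (σ i hi)) (hC0 : ∀ i, ¬ p i → C (b i) = 0)
include hσ hC hC0

theorem adjoint_apply_of_apply_eq (i : ι) (hi : p i) : (C†) (b (σ i hi)) = b i := by
  classical
  refine b.ext_inner fun j => ?_
  rw [ContinuousLinearMap.adjoint_inner_right]
  by_cases hj : p j
  · rw [hC j hj, orthonormal_iff_ite.mp b.orthonormal, orthonormal_iff_ite.mp b.orthonormal]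
    exact if_congr ⟨hσ j i hj hi, fun h => by subst h; rfl⟩ rfl rfl
  · rw [hC0 j hj, inner_zero_left, orthonormal_iff_ite.mp b.orthonormal,
      if_neg (by rintro rfl; exact hj hi)]

theorem adjoint_comp_self_apply_of_pos (i : ι) (hi : p i) : (C† ∘L C) (b i) = b i := by
  rw [ContinuousLinearMap.comp_apply, hC i hi, b.adjoint_apply_of_apply_eq hσ hC hC0]

theorem inner_adjoint_comp_self_apply [DecidablePred p] (i : ι) (x : E) :
    ⟪b i, (C† ∘L C) x⟫_𝕜 = (if p i then 1 else 0) * ⟪b i, x⟫_𝕜 := by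
  rw [ContinuousLinearMap.comp_apply, ContinuousLinearMap.adjoint_inner_right]
  split_ifs with hi
  · rw [hC i hi, ← ContinuousLinearMap.adjoint_inner_left, b.adjoint_apply_of_apply_eq hσ hC hC0,
      one_mul]
  · rw [hC0 i hi, inner_zero_left, zero_mul]

end PartialIsometry

end HilbertBasis

theorem ContinuousLinearMap.tendsto_cesaro_apply {𝕜 E : Type*} [RCLike 𝕜] [NormedAddCommGroup E]
    [NormedSpace 𝕜 E] [NormedSpace ℝ E] [IsScalarTower ℝ 𝕜 E] {T : ℕ → E →L[𝕜] E} {x y : E}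
    (h : Tendsto (fun k => T k x) atTop (𝓝 y)) :
    Tendsto (fun n : ℕ => ((n : 𝕜)⁻¹ • ∑ k ∈ range n, T k) x) atTop (𝓝 y) := by
  convert h.cesaro_smul using 2 with n
  rw [_root_.smul_apply, _root_.sum_apply, RCLike.real_smul_eq_coe_smul (K := 𝕜)]
  push_cast
  rfl

theorem ContinuousLinearMap.cesaro_apply_eq_self {𝕜 E : Type*} [RCLike 𝕜] [NormedAddCommGroup E]
    [NormedSpace 𝕜 E] {T : ℕ → E →L[𝕜] E} {n : ℕ} {v : E}
    (hn : n ≠ 0) (hT : ∀ k < n, T k v = v) : ((n : 𝕜)⁻¹ • ∑ k ∈ range n, T k) v = v := by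
  rw [_root_.smul_apply, _root_.sum_apply, sum_congr rfl fun k hk => hT k (mem_range.1 hk),
    sum_const, card_range, ← Nat.cast_smul_eq_nsmul 𝕜, smul_smul,
    inv_mul_cancel₀ (Nat.cast_ne_zero.2 hn), one_smul]

namespace WMIdx

theorem ok_vac (i : ℤ) : ok i vac := by
  simp [ok, vac]

theorem ok_cons_iff {i j : ℤ} {l : WMIdx} {h : ok j l} : ok i (cons j l h) ↔ j ≤ i := by
  simp [ok, cons]

theorem cons_ne_vac {i : ℤ} {l : WMIdx} {h : ok i l} : cons i l h ≠ vac := fun e => by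
  simpa [cons, vac] using congrArg Subtype.val e

theorem eq_of_cons_eq_cons {i : ℤ} {l m : WMIdx} {hl : ok i l} {hm : ok i m}
    (h : cons i l hl = cons i m hm) : l = m :=
  Subtype.ext (by simpa [cons] using congrArg Subtype.val h)

theorem eventually_not_ok_neg {m : WMIdx} (hm : m ≠ vac) : ∀ᶠ k : ℕ in atTop, ¬ ok (-k) m := by
  obtain ⟨_ | ⟨j, t⟩, ht⟩ := m
  · exact absurd rfl hm
  · refine eventually_atTop.2 ⟨(1 - j).toNat, fun k hk hok => ?_⟩
    have := hok j rfl
    omega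

end WMIdx

theorem wm_tendsto_adjoint_comp_self_neg {H : Type*} [NormedAddCommGroup H]
    [InnerProductSpace ℂ H] [CompleteSpace H] (b : HilbertBasis WMIdx ℂ H) (C : ℤ → H →L[ℂ] H)
    (hC : ∀ i l (h : WMIdx.ok i l), C i (b l) = b (WMIdx.cons i l h))
    (hC0 : ∀ i l, ¬ WMIdx.ok i l → C i (b l) = 0) (x : H) :
    Tendsto (fun k : ℕ => ((C (-k))† ∘L C (-k)) x) atTop
      (𝓝 ((innerSL ℂ (b WMIdx.vac)).smulRight (b WMIdx.vac) x)) := by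
  classical
  refine b.tendsto_apply_of_inner_eq_mul (c := 1)
    (fun k m x => b.inner_adjoint_comp_self_apply (fun _ _ _ _ => WMIdx.eq_of_cons_eq_cons)
      (hC _) (hC0 _) m x)
    (fun m x => b.inner_smulRight_innerSL_apply _ m x) (fun k m => ?_) (fun m => ?_) x
  · split_ifs <;> norm_num
  · by_cases hm : m = WMIdx.vac
    · simp [hm, WMIdx.ok_vac]
    · simp only [if_neg hm]
      exact tendsto_const_nhds.congr' ((WMIdx.eventually_not_ok_neg hm).mono fun k hk => by
        simp [hk])

/-- the Cesàro averages `(1/n) Σ_{k=0}^{n-1} A_{-k} A_{-k}†` converge to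
`P_Ω` strongly but not in norm: for every `n ≥ 1` the distance in norm is at least 1. -/
theorem wm_cesaro_averages_strong_not_norm {H : Type} [NormedAddCommGroup H] [InnerProductSpace ℂ H] [CompleteSpace H]
    (b : HilbertBasis WMIdx ℂ H) (C : ℤ → H →L[ℂ] H)
    (hC : ∀ i l (h : WMIdx.ok i l), C i (b l) = b (WMIdx.cons i l h))
    (hC0 : ∀ i l, ¬ WMIdx.ok i l → C i (b l) = 0)
    (PΩ : H →L[ℂ] H) (hPΩ : PΩ = (innerSL ℂ (b WMIdx.vac)).smulRight (b WMIdx.vac)) :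
    (∀ x : H, Filter.Tendsto
      (fun n : ℕ => (n : ℂ)⁻¹ • (∑ k ∈ Finset.range n,
        ((ContinuousLinearMap.adjoint (C (-(k : ℤ)))).comp (C (-(k : ℤ))))) x)
      Filter.atTop (nhds (PΩ x))) ∧
    (∀ n : ℕ, 1 ≤ n →
      1 ≤ ‖PΩ - (n : ℂ)⁻¹ • ∑ k ∈ Finset.range n,
        ((ContinuousLinearMap.adjoint (C (-(k : ℤ)))).comp (C (-(k : ℤ))))‖) := by
  subst hPΩ
  refine ⟨fun x => ContinuousLinearMap.tendsto_cesaro_apply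
    (wm_tendsto_adjoint_comp_self_neg b C hC hC0 x), fun n hn => ?_⟩
  set v := b (WMIdx.cons (-n) WMIdx.vac (WMIdx.ok_vac _))
  have hfix : ((n : ℂ)⁻¹ • ∑ k ∈ range n, (C (-k))† ∘L C (-k)) v = v :=
    ContinuousLinearMap.cesaro_apply_eq_self (by omega) fun k hk =>
      b.adjoint_comp_self_apply_of_pos (fun _ _ _ _ => WMIdx.eq_of_cons_eq_cons) (hC _) (hC0 _) _
        (WMIdx.ok_cons_iff.2 (by omega))
  have hvac : (innerSL ℂ (b WMIdx.vac)).smulRight (b WMIdx.vac) v = 0 := by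
    rw [ContinuousLinearMap.smulRight_apply, innerSL_apply_apply,
      b.orthonormal.inner_eq_zero WMIdx.cons_ne_vac.symm, zero_smul]
  simpa [hfix, hvac, v, b.orthonormal.1] using
    ((innerSL ℂ (b WMIdx.vac)).smulRight (b WMIdx.vac) - (n : ℂ)⁻¹ •
      ∑ k ∈ range n, (C (-k))† ∘L C (-k)).le_opNorm v
end

section
/- For any word Y of the form Y = (A†_{i_1})^{k_1} ⋯ (A†_{i_m})^{k_m} A_{j_1}^{l_1} ⋯ A_{j_n}^{l_n} in the weakly monotone generators (with i_1 > ⋯ > i_m, j_1 < ⋯ < j_n) that is not of the form A_i† A_i, the shifted Cesàro averages satisfy ‖(1/n) Σ_{k=0}^{n−1} τ^k(Y)‖ ≤ 1/√n for all n ∈ ℕ, where τ shifts every index by +1. -/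
open scoped ComplexOrder

/-!
Write `Y_k = τ^k(Y)`. If `m ≥ 1`, then `Y_k = (A†_{i_1+k})^{k_1} R_k` with `R_k` a contraction, and
the relation `A_i A†_j = 0` for `i ≠ j` gives `Y_k^* Y_{k'} = 0` for `k ≠ k'`: the `Y_k` have
pairwise orthogonal ranges. The C⋆-identity then yields
`‖Σ_k Y_k‖² = ‖Σ_k Y_k^* Y_k‖ ≤ Σ_k ‖Y_k‖² ≤ N`. If `m = 0`, the same argument applies to the
adjoints `Y_k^*`, whose leading factor is a creation operator. The `A†_i` are contractions because
`A_i A†_i` is an orthogonal projection.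
-/

open scoped InnerProductSpace

theorem WMIdx.cons_inj_s10 {i j : ℤ} {s l : WMIdx} {hs : WMIdx.ok i s} {hl : WMIdx.ok j l} :
    WMIdx.cons i s hs = WMIdx.cons j l hl ↔ i = j ∧ s = l := by
  refine ⟨fun h => ?_, fun ⟨hij, hsl⟩ => by subst hij hsl; rfl⟩
  have h' := congrArg Subtype.val h
  simp only [WMIdx.cons, List.cons.injEq] at h'
  exact ⟨h'.1, Subtype.ext h'.2⟩

section

variable {A : Type*}

theorem star_pow_mul_mul_pow_mul_eq_zero [MonoidWithZero A] [StarMul A] {c d : A}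
    (h : star c * d = 0) {p q : ℕ} (hp : p ≠ 0) (hq : q ≠ 0) (r r' : A) :
    star (c ^ p * r) * (d ^ q * r') = 0 := by
  obtain ⟨p, rfl⟩ := Nat.exists_eq_succ_of_ne_zero hp
  obtain ⟨q, rfl⟩ := Nat.exists_eq_succ_of_ne_zero hq
  calc star (c ^ (p + 1) * r) * (d ^ (q + 1) * r')
      = star r * star c ^ p * (star c * d) * d ^ q * r' := by
        rw [star_mul, star_pow, pow_succ, pow_succ']
        simp only [mul_assoc]
    _ = 0 := by rw [h, mul_zero, zero_mul, zero_mul]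

theorem norm_sum_sq_le_of_star_mul_eq_zero [NonUnitalNormedRing A] [StarRing A] [CStarRing A]
    {ι : Type*} (s : Finset ι) (a : ι → A)
    (h : ∀ i ∈ s, ∀ j ∈ s, i ≠ j → star (a i) * a j = 0) :
    ‖∑ i ∈ s, a i‖ ^ 2 ≤ ∑ i ∈ s, ‖a i‖ ^ 2 := by
  have hdiag : star (∑ i ∈ s, a i) * ∑ i ∈ s, a i = ∑ i ∈ s, star (a i) * a i := by
    rw [star_sum, Finset.sum_mul_sum]
    refine Finset.sum_congr rfl fun i hi => ?_
    exact Finset.sum_eq_single i (fun j hj hji => h i hi j hj hji.symm) (absurd hi)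
  calc ‖∑ i ∈ s, a i‖ ^ 2 = ‖∑ i ∈ s, star (a i) * a i‖ := by
        rw [← hdiag, CStarRing.norm_star_mul_self, sq]
    _ ≤ ∑ i ∈ s, ‖star (a i) * a i‖ := norm_sum_le _ _
    _ = ∑ i ∈ s, ‖a i‖ ^ 2 := by simp only [CStarRing.norm_star_mul_self, sq]

theorem norm_sum_le_sqrt_card_of_star_mul_eq_zero [NonUnitalNormedRing A] [StarRing A]
    [CStarRing A] {ι : Type*} (s : Finset ι) (a : ι → A) (ha : ∀ i ∈ s, ‖a i‖ ≤ 1)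
    (h : ∀ i ∈ s, ∀ j ∈ s, i ≠ j → star (a i) * a j = 0) :
    ‖∑ i ∈ s, a i‖ ≤ √(s.card : ℝ) := by
  refine Real.le_sqrt_of_sq_le ((norm_sum_sq_le_of_star_mul_eq_zero s a h).trans ?_)
  calc ∑ i ∈ s, ‖a i‖ ^ 2 ≤ ∑ _i ∈ s, (1 : ℝ) :=
        Finset.sum_le_sum fun i hi => pow_le_one₀ (norm_nonneg _) (ha i hi)
    _ = s.card := by simp

theorem norm_le_one_of_isStarProjection_star_mul_self [NonUnitalNormedRing A] [StarRing A]
    [CStarRing A] {a : A} (h : IsStarProjection (star a * a)) : ‖a‖ ≤ 1 := by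
  have := h.norm_le
  rw [CStarRing.norm_star_mul_self] at this
  nlinarith [norm_nonneg a]

variable (A) in
/-- Unlike `Submonoid.unitClosedBall`, this needs no `NormOneClass`: `‖1‖ ≤ 1` holds in every
C⋆-ring, the zero ring included. -/
def CStarRing.unitClosedBall [NormedRing A] [StarRing A] [CStarRing A] : Submonoid A :=
  { Subsemigroup.unitClosedBall A with
    one_mem' := mem_closedBall_zero_iff.mpr <|
      IsStarProjection.norm_le _ (IsStarProjection.one A) }

theorem CStarRing.mem_unitClosedBall [NormedRing A] [StarRing A] [CStarRing A] {a : A} :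
    a ∈ CStarRing.unitClosedBall A ↔ ‖a‖ ≤ 1 :=
  mem_closedBall_zero_iff

end

theorem norm_inv_natCast_smul_le_one_div_sqrt {𝕜 E : Type*} [RCLike 𝕜]
    [SeminormedAddCommGroup E] [NormedSpace 𝕜 E] {N : ℕ} {x : E} (hx : ‖x‖ ≤ √N) :
    ‖(N : 𝕜)⁻¹ • x‖ ≤ 1 / √N :=
  calc ‖(N : 𝕜)⁻¹ • x‖ = (N : ℝ)⁻¹ * ‖x‖ := by rw [norm_smul, norm_inv, RCLike.norm_natCast]
    _ ≤ (N : ℝ)⁻¹ * √N := by gcongr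
    _ = 1 / √N := by rw [inv_mul_eq_div, Real.sqrt_div_self']

section HilbertBasis

variable {ι H : Type*} [NormedAddCommGroup H] [InnerProductSpace ℂ H]

theorem HilbertBasis.ext_inner_left_s10 (b : HilbertBasis ι ℂ H) {x y : H}
    (h : ∀ i, ⟪b i, x⟫_ℂ = ⟪b i, y⟫_ℂ) : x = y :=
  b.repr.injective <| lp.ext <| funext fun i => by
    rw [b.repr_apply_apply, b.repr_apply_apply, h]

theorem HilbertBasis.continuousLinearMap_ext (b : HilbertBasis ι ℂ H) {T S : H →L[ℂ] H}
    (h : ∀ i, T (b i) = S (b i)) : T = S :=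
  ContinuousLinearMap.ext_on (Submodule.dense_iff_topologicalClosure_eq_top.mpr b.dense_span)
    (Set.forall_mem_range.mpr h)

end HilbertBasis

variable {H : Type} [NormedAddCommGroup H] [InnerProductSpace ℂ H]

/-- `C i` acts as the weakly monotone creation operator `A†_i` on the basis `b`. -/
structure IsWMCreation (b : HilbertBasis WMIdx ℂ H) (C : ℤ → H →L[ℂ] H) : Prop where
  apply_of_ok : ∀ i l (h : WMIdx.ok i l), C i (b l) = b (WMIdx.cons i l h)
  apply_of_not_ok : ∀ i l, ¬ WMIdx.ok i l → C i (b l) = 0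

namespace IsWMCreation

variable {b : HilbertBasis WMIdx ℂ H} {C : ℤ → H →L[ℂ] H}

theorem inner_apply_basis_eq_zero (hC : IsWMCreation b C) {i j : ℤ} {s l : WMIdx}
    (h : i ≠ j ∨ s ≠ l) : ⟪C i (b s), C j (b l)⟫_ℂ = 0 := by
  by_cases hs : WMIdx.ok i s
  · by_cases hl : WMIdx.ok j l
    · rw [hC.apply_of_ok i s hs, hC.apply_of_ok j l hl]
      refine b.orthonormal.inner_eq_zero fun heq => ?_
      rw [WMIdx.cons_inj_s10] at heq
      tauto
    · rw [hC.apply_of_not_ok j l hl, inner_zero_right]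
  · rw [hC.apply_of_not_ok i s hs, inner_zero_left]

theorem star_apply_cons [CompleteSpace H] (hC : IsWMCreation b C) (i : ℤ) (l : WMIdx)
    (h : WMIdx.ok i l) :
    star (C i) (b (WMIdx.cons i l h)) = b l := by
  refine b.ext_inner_left_s10 fun s => ?_
  rw [ContinuousLinearMap.star_eq_adjoint, ContinuousLinearMap.adjoint_inner_right,
    ← hC.apply_of_ok i l h]
  rcases eq_or_ne s l with rfl | hsl
  · simp [hC.apply_of_ok i s h, inner_self_eq_norm_sq_to_K, b.orthonormal.norm_eq_one]
  · rw [hC.inner_apply_basis_eq_zero (Or.inr hsl), b.orthonormal.inner_eq_zero hsl]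

theorem star_mul_eq_zero_of_ne [CompleteSpace H] (hC : IsWMCreation b C) {i j : ℤ}
    (hij : i ≠ j) :
    star (C i) * C j = 0 := by
  refine b.continuousLinearMap_ext fun l => b.ext_inner_left_s10 fun s => ?_
  rw [mul_apply_eq_comp, ContinuousLinearMap.star_eq_adjoint,
    ContinuousLinearMap.adjoint_inner_right, hC.inner_apply_basis_eq_zero (Or.inl hij),
    zero_apply, inner_zero_right]

theorem isStarProjection_star_mul_self [CompleteSpace H] (hC : IsWMCreation b C) (i : ℤ) :
    IsStarProjection (star (C i) * C i) := by
  refine ⟨b.continuousLinearMap_ext fun l => ?_, IsSelfAdjoint.star_mul_self _⟩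
  by_cases hl : WMIdx.ok i l
  · have hfix : (star (C i) * C i) (b l) = b l := by
      rw [mul_apply_eq_comp, hC.apply_of_ok i l hl, hC.star_apply_cons]
    rw [mul_apply_eq_comp, hfix, hfix]
  · simp [hC.apply_of_not_ok i l hl]

theorem norm_le_one [CompleteSpace H] (hC : IsWMCreation b C) (i : ℤ) : ‖C i‖ ≤ 1 :=
  norm_le_one_of_isStarProjection_star_mul_self (hC.isStarProjection_star_mul_self i)

theorem norm_sum_pow_mul_le_sqrt [CompleteSpace H] (hC : IsWMCreation b C) (i : ℤ) {p : ℕ}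
    (hp : p ≠ 0) (R : ℕ → H →L[ℂ] H) (hR : ∀ k, ‖R k‖ ≤ 1) (N : ℕ) :
    ‖∑ k ∈ Finset.range N, C (i + k) ^ p * R k‖ ≤ √N := by
  have hcontr : ∀ k : ℕ, C (i + k) ^ p * R k ∈ CStarRing.unitClosedBall (H →L[ℂ] H) := fun k =>
    mul_mem (pow_mem (CStarRing.mem_unitClosedBall.mpr (hC.norm_le_one _)) p)
      (CStarRing.mem_unitClosedBall.mpr (hR k))
  simpa using norm_sum_le_sqrt_card_of_star_mul_eq_zero (Finset.range N) _
    (fun k _ => CStarRing.mem_unitClosedBall.mp (hcontr k))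
    (fun k _ k' _ hkk' => star_pow_mul_mul_pow_mul_eq_zero
      (hC.star_mul_eq_zero_of_ne (by omega)) hp hp _ _)

end IsWMCreation

theorem wm_cesaro_estimate_for_words_general {H : Type} [NormedAddCommGroup H] [InnerProductSpace ℂ H] [CompleteSpace H]
    (b : HilbertBasis WMIdx ℂ H) (C : ℤ → H →L[ℂ] H)
    (hC : ∀ i l (h : WMIdx.ok i l), C i (b l) = b (WMIdx.cons i l h))
    (hC0 : ∀ i l, ¬ WMIdx.ok i l → C i (b l) = 0)
    (m n : ℕ) (hmn : 1 ≤ m + n)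
    (iIdx : Fin m → ℤ) (kpow : Fin m → ℕ) (hkpow : ∀ a, 1 ≤ kpow a)
    (jIdx : Fin n → ℤ) (lpow : Fin n → ℕ) (hlpow : ∀ a, 1 ≤ lpow a) :
    ∀ N : ℕ,
      ‖(N : ℂ)⁻¹ • ∑ k ∈ Finset.range N,
          ((List.ofFn fun a : Fin m => (C (iIdx a + (k : ℤ))) ^ kpow a).prod *
            (List.ofFn fun a : Fin n =>
              (ContinuousLinearMap.adjoint (C (jIdx a + (k : ℤ)))) ^ lpow a).prod)‖
        ≤ 1 / Real.sqrt N := by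
  intro N
  have hWM : IsWMCreation b C := ⟨hC, hC0⟩
  set U := CStarRing.unitClosedBall (H →L[ℂ] H)
  have hCpow : ∀ i p, C i ^ p ∈ U := fun i p =>
    pow_mem (CStarRing.mem_unitClosedBall.mpr (hWM.norm_le_one i)) p
  have hApow : ∀ i p, ContinuousLinearMap.adjoint (C i) ^ p ∈ U := fun i p => by
    rw [CStarRing.mem_unitClosedBall, ← ContinuousLinearMap.star_eq_adjoint, ← star_pow,
      norm_star]
    exact CStarRing.mem_unitClosedBall.mp (hCpow i p)
  have hprod : ∀ (r : ℕ) (T : Fin r → H →L[ℂ] H), (∀ a, T a ∈ U) → (List.ofFn T).prod ∈ U :=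
    fun r T hT => Submonoid.list_prod_mem _ (List.forall_mem_ofFn_iff.mpr hT)
  refine norm_inv_natCast_smul_le_one_div_sqrt ?_
  rcases m with _ | m
  · -- only annihilators: pass to adjoints, where the last factor becomes the leading creator
    obtain ⟨n, rfl⟩ := Nat.exists_eq_succ_of_ne_zero (by omega : n ≠ 0)
    rw [← norm_star, star_sum]
    simp only [List.ofFn_zero, List.prod_nil, one_mul, List.ofFn_succ', List.prod_concat,
      star_mul, star_pow, ContinuousLinearMap.star_eq_adjoint,
      ContinuousLinearMap.adjoint_adjoint]
    refine hWM.norm_sum_pow_mul_le_sqrt _ (Nat.one_le_iff_ne_zero.mp (hlpow _)) _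
      (fun k => ?_) N
    rw [← ContinuousLinearMap.star_eq_adjoint, norm_star]
    exact CStarRing.mem_unitClosedBall.mp (hprod _ _ fun a => hApow _ _)
  · simp only [List.ofFn_succ, List.prod_cons, mul_assoc]
    exact hWM.norm_sum_pow_mul_le_sqrt _ (Nat.one_le_iff_ne_zero.mp (hkpow 0)) _
      (fun k => CStarRing.mem_unitClosedBall.mp
        (mul_mem (hprod _ _ fun a => hCpow _ _) (hprod _ _ fun a => hApow _ _))) N

/-- for any word
`Y = (A†_{i_1})^{k_1} ⋯ (A†_{i_m})^{k_m} A_{j_1}^{l_1} ⋯ A_{j_n}^{l_n}`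
(with `i_1 > ⋯ > i_m`, `j_1 < ⋯ < j_n`, all powers `≥ 1`, and `Y` nonempty) which is
not of the form `A_i† A_i`, the Cesàro averages of the shifts of `Y` satisfy
`‖(1/N) Σ_{k=0}^{N-1} τ^k(Y)‖ ≤ 1/√N`, where `τ` shifts every index by `+1`. -/
theorem wm_cesaro_estimate_for_words {H : Type} [NormedAddCommGroup H] [InnerProductSpace ℂ H] [CompleteSpace H]
    (b : HilbertBasis WMIdx ℂ H) (C : ℤ → H →L[ℂ] H)
    (hC : ∀ i l (h : WMIdx.ok i l), C i (b l) = b (WMIdx.cons i l h))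
    (hC0 : ∀ i l, ¬ WMIdx.ok i l → C i (b l) = 0)
    (m n : ℕ) (hmn : 1 ≤ m + n)
    (iIdx : Fin m → ℤ) (hi : StrictAnti iIdx) (kpow : Fin m → ℕ) (hkpow : ∀ a, 1 ≤ kpow a)
    (jIdx : Fin n → ℤ) (hj : StrictMono jIdx) (lpow : Fin n → ℕ) (hlpow : ∀ a, 1 ≤ lpow a)
    (hY : ¬ ∃ i0 : ℤ, m = 1 ∧ n = 1 ∧
      (∀ a : Fin m, iIdx a = i0 ∧ kpow a = 1) ∧ (∀ a : Fin n, jIdx a = i0 ∧ lpow a = 1)) :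
    ∀ N : ℕ,
      ‖(N : ℂ)⁻¹ • ∑ k ∈ Finset.range N,
          ((List.ofFn fun a : Fin m => (C (iIdx a + (k : ℤ))) ^ kpow a).prod *
            (List.ofFn fun a : Fin n =>
              (ContinuousLinearMap.adjoint (C (jIdx a + (k : ℤ)))) ^ lpow a).prod)‖
        ≤ 1 / Real.sqrt N :=
  wm_cesaro_estimate_for_words_general b C hC hC0 m n hmn iIdx kpow hkpow jIdx lpow hlpow
end

section
/- Let (A, Φ) be a C*-dynamical system (A a unital C*-algebra, Φ a unital *-endomorphism) and A^Φ its fixed-point subalgebra. Then every pure state on A^Φ extends to an extreme point of the convex set of Φ-invariant states on A. -/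
/-!
A state of `A^Φ` has norm one, so by Hahn–Banach it extends to a functional on `A` of norm one
sending `1` to `1`, and such a functional is positive. Averaging this extension along the orbit of
`ψ ↦ ψ ∘ Φ` and taking a weak-* cluster point yields a `Φ`-invariant extension; hence the
`Φ`-invariant extensions of `ω` form a nonempty compact set, which has an extreme point by
Krein–Milman. Because `ω` is pure, this set is a face of the `Φ`-invariant states: if a proper
convex combination of two invariant states restricts to `ω`, so does each of them. Extreme points
of a face are extreme in the whole set.
-/

open Set Filter Topology
open scoped ComplexOrder

section FixedPoint

variable {E : Type*} [AddCommGroup E] [Module ℝ E] [TopologicalSpace E]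
  [IsTopologicalAddGroup E] [ContinuousSMul ℝ E] [T2Space E]

theorem IsCompact.exists_isFixedPt_of_convex {K : Set E} (hK : IsCompact K) (hKc : Convex ℝ K)
    (hne : K.Nonempty) (T : E →ₗ[ℝ] E) (hT : Continuous T) (hTK : MapsTo T K K) :
    ∃ x ∈ K, Function.IsFixedPt T x := by
  obtain ⟨x₀, hx₀⟩ := hne
  set avg : ℕ → E := fun n => ∑ k ∈ Finset.range (n + 1), (1 / ((n : ℝ) + 1)) • T^[k] x₀
  have havg_mem : ∀ n, avg n ∈ K := fun n =>
    hKc.sum_mem (fun _ _ => by positivity) (by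
      simp only [one_div, Finset.sum_const, Finset.card_range, nsmul_eq_mul, Nat.cast_add,
        Nat.cast_one]
      exact mul_inv_cancel₀ (by positivity))
      fun k _ => hTK.iterate k hx₀
  have havg_sub : ∀ n, T (avg n) - avg n =
      (1 / ((n : ℝ) + 1)) • (T^[n + 1] x₀ - x₀) := by
    intro n
    simp only [avg, map_sum, map_smul, ← Function.iterate_succ_apply' T, ← Finset.sum_sub_distrib,
      ← smul_sub, ← Finset.smul_sum]
    rw [Finset.sum_range_sub (fun k => T^[k] x₀)]
    rfl
  have hlim : Tendsto (fun n => T (avg n) - avg n) atTop (𝓝 0) := by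
    have hK' := hK.isVonNBounded ℝ
    simp only [havg_sub, smul_sub]
    simpa using (hK'.smul_tendsto_zero (.of_forall fun n => hTK.iterate (n + 1) hx₀)
      tendsto_one_div_add_atTop_nhds_zero_nat).sub
      (hK'.smul_tendsto_zero (.of_forall fun _ => hx₀) tendsto_one_div_add_atTop_nhds_zero_nat)
  obtain ⟨p, hpK, hp⟩ :=
    hK.exists_mapClusterPt (f := atTop) (tendsto_principal.2 (.of_forall havg_mem))
  have hcl : MapClusterPt (T p - p) atTop (fun n => T (avg n) - avg n) :=
    hp.continuousAt_comp (f := fun x => T x - x) (hT.sub continuous_id).continuousAt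
  refine ⟨p, hpK, sub_eq_zero.1 (eq_of_nhds_neBot ?_)⟩
  exact (ClusterPt.mono hcl hlim).neBot

end FixedPoint

theorem isExtreme_inter_preimage_singleton {E F : Type*} [AddCommGroup E] [Module ℝ E]
    [AddCommGroup F] [Module ℝ F] (L : E →ₗ[ℝ] F) {C : Set E} {D : Set F} (hCD : MapsTo L C D)
    {y : F} (hy : y ∈ D.extremePoints ℝ) : IsExtreme ℝ C (C ∩ L ⁻¹' {y}) := by
  refine ⟨inter_subset_left, fun x₁ hx₁ x₂ hx₂ x hx hseg => ⟨hx₁, hy.2 (hCD hx₁) (hCD hx₂) ?_⟩⟩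
  obtain ⟨a, b, ha, hb, hab, rfl⟩ := hseg
  refine ⟨a, b, ha, hb, hab, ?_⟩
  rw [← (hx.2 : L _ = y), map_add, map_smul, map_smul]

section StateSpace

/-- States of `A`, viewed inside `A → ℂ`, whose product topology restricts to the weak-* topology
on them. -/
def stateSpace (A : Type*) [Ring A] [StarRing A] [Algebra ℂ A] : Set (A → ℂ) :=
  {ψ | ∃ φ : A →ₗ[ℂ] ℂ, ψ = φ ∧ φ 1 = 1 ∧ ∀ a, 0 ≤ φ (star a * a)}

variable {A B : Type*} [Ring A] [StarRing A] [Algebra ℂ A] [Ring B] [StarRing B] [Algebra ℂ B]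

theorem convex_stateSpace : Convex ℝ (stateSpace A) := by
  rintro _ ⟨φ₁, rfl, h₁, hpos₁⟩ _ ⟨φ₂, rfl, h₂, hpos₂⟩ s t hs ht hst
  refine ⟨s • φ₁ + t • φ₂, rfl, ?_, fun a => ?_⟩
  · simp [h₁, h₂, ← Complex.ofReal_add, hst]
  · simp only [LinearMap.add_apply, LinearMap.smul_apply, Complex.real_smul]
    exact add_nonneg (mul_nonneg (Complex.zero_le_real.2 hs) (hpos₁ a))
      (mul_nonneg (Complex.zero_le_real.2 ht) (hpos₂ a))

theorem isClosed_stateSpace : IsClosed (stateSpace A) := by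
  have : stateSpace A = range ((↑) : (A →ₗ[ℂ] ℂ) → A → ℂ) ∩ {ψ | ψ 1 = 1} ∩
      ⋂ a, {ψ | 0 ≤ ψ (star a * a)} := by
    ext ψ
    simp only [stateSpace, mem_ofPred_eq, mem_inter_iff, mem_range, mem_iInter]
    constructor
    · rintro ⟨φ, rfl, h1, hpos⟩
      exact ⟨⟨⟨φ, rfl⟩, h1⟩, hpos⟩
    · rintro ⟨⟨⟨φ, rfl⟩, h1⟩, hpos⟩
      exact ⟨φ, rfl, h1, hpos⟩
  rw [this]
  exact ((LinearMap.isClosed_range_coe _ _ _).inter (isClosed_eq (continuous_apply 1)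
    continuous_const)).inter (isClosed_iInter fun a => isClosed_le continuous_const
    (continuous_apply _))

theorem mapsTo_funLeft_stateSpace (Φ : A →⋆ₐ[ℂ] B) :
    MapsTo (LinearMap.funLeft ℝ ℂ Φ) (stateSpace B) (stateSpace A) := by
  rintro _ ⟨φ, rfl, h1, hpos⟩
  refine ⟨φ.comp (Φ : A →ₗ[ℂ] B), rfl, by simpa using h1, fun a => ?_⟩
  simpa [map_star] using hpos (Φ a)

end StateSpace

section CStarAlgebra

variable {A : Type*} [CStarAlgebra A]

theorem norm_apply_le_of_map_one (f : A →ₗ[ℂ] ℂ) (hf1 : f 1 = 1)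
    (hf : ∀ a, 0 ≤ f (star a * a)) (a : A) : ‖f a‖ ≤ ‖a‖ := by
  -- Cauchy–Schwarz for `⟪1, a⟫ = f a` in the GNS space of `f`, where `‖a‖² = f (star a * a)`
  let := CStarAlgebra.spectralOrder A
  let := CStarAlgebra.spectralOrderedRing A
  let F : A →ₚ[ℂ] ℂ := .mk₀ f fun x hx => by
    obtain ⟨b, rfl⟩ := CStarAlgebra.nonneg_iff_eq_star_mul_self.mp hx
    exact hf b
  have hF1 : F 1 = 1 := hf1
  have hnorm_one : ‖F.toPreGNS 1‖ = 1 := by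
    have h := F.preGNS_norm_sq (F.toPreGNS 1)
    simp only [PositiveLinearMap.ofPreGNS_toPreGNS, star_one, one_mul] at h
    have : ‖F.toPreGNS 1‖ ^ 2 = 1 := by exact_mod_cast h.trans hF1
    exact (pow_eq_one_iff_of_nonneg (norm_nonneg _) two_ne_zero).1 this
  have hnorm_le : ‖F.toPreGNS a‖ ≤ ‖a‖ := by
    have h := F.preGNS_norm_sq (F.toPreGNS a)
    have hle : F (star a * a) ≤ F (algebraMap ℝ A (‖a‖ ^ 2)) :=
      F.monotone' CStarAlgebra.star_mul_le_algebraMap_norm_sq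
    have halg : F (algebraMap ℝ A (‖a‖ ^ 2)) = ((‖a‖ ^ 2 : ℝ) : ℂ) := by
      simp [Algebra.algebraMap_eq_smul_one, hF1]
    rw [PositiveLinearMap.ofPreGNS_toPreGNS] at h
    rw [← h, halg, ← Complex.ofReal_pow, Complex.real_le_real] at hle
    exact (pow_le_pow_iff_left₀ (norm_nonneg _) (norm_nonneg _) two_ne_zero).1 hle
  calc ‖f a‖ = ‖inner ℂ (F.toPreGNS 1) (F.toPreGNS a)‖ := by
        rw [F.preGNS_inner_def]
        simp only [PositiveLinearMap.ofPreGNS_toPreGNS, star_one, one_mul]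
        rfl
    _ ≤ ‖F.toPreGNS 1‖ * ‖F.toPreGNS a‖ := norm_inner_le_norm _ _
    _ ≤ ‖a‖ := by rw [hnorm_one, one_mul]; exact hnorm_le

theorem IsSelfAdjoint.norm_add_smul_I_sq_le [Nontrivial A] {a : A} (ha : IsSelfAdjoint a) (t : ℝ) :
    ‖a + (t * Complex.I) • (1 : A)‖ ^ 2 ≤ ‖a‖ ^ 2 + t ^ 2 := by
  have hprod : star (a + (t * Complex.I) • (1 : A)) * (a + (t * Complex.I) • 1) =
      a * a + ((t ^ 2 : ℝ) : ℂ) • 1 := by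
    simp only [star_add, star_smul, ha.star_eq, star_one, Complex.star_def, map_mul,
      Complex.conj_ofReal, Complex.conj_I, add_mul, mul_add, smul_mul_assoc, mul_smul_comm,
      one_mul, mul_one]
    match_scalars
    · rfl
    · ring
    · linear_combination -(t : ℂ) ^ 2 * Complex.I_sq
  calc ‖a + (t * Complex.I) • (1 : A)‖ ^ 2 = ‖a * a + ((t ^ 2 : ℝ) : ℂ) • (1 : A)‖ := by
        rw [sq, ← CStarRing.norm_star_mul_self, hprod]
    _ ≤ ‖a * a‖ + ‖((t ^ 2 : ℝ) : ℂ) • (1 : A)‖ := norm_add_le _ _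
    _ ≤ ‖a‖ ^ 2 + t ^ 2 := by
        rw [norm_smul, CStarRing.norm_one, mul_one, Complex.norm_real,
          Real.norm_of_nonneg (sq_nonneg t), sq]
        gcongr
        exact (norm_mul_le a a).trans_eq (sq _).symm

theorem im_apply_eq_zero_of_isSelfAdjoint (g : A →ₗ[ℂ] ℂ) (hg : ∀ a, ‖g a‖ ≤ ‖a‖)
    (hg1 : g 1 = 1) {a : A} (ha : IsSelfAdjoint a) : (g a).im = 0 := by
  have : Nontrivial A := ⟨1, 0, fun h => by simp [h] at hg1⟩
  set x := (g a).re
  set y := (g a).im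
  have key : ∀ t : ℝ, 2 * t * y ≤ ‖a‖ ^ 2 - x ^ 2 - y ^ 2 := by
    intro t
    have hgt : ‖g (a + (t * Complex.I) • 1)‖ ^ 2 = x ^ 2 + (y + t) ^ 2 := by
      rw [map_add, map_smul, hg1, smul_eq_mul, mul_one, Complex.sq_norm, Complex.normSq_apply]
      simp only [Complex.add_re, Complex.mul_re, Complex.ofReal_re, Complex.I_re, mul_zero,
        Complex.ofReal_im, Complex.I_im, mul_one, sub_self, add_zero, Complex.add_im,
        Complex.mul_im, x, y]
      ring
    have := (pow_le_pow_left₀ (norm_nonneg _) (hg (a + (t * Complex.I) • 1)) 2).trans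
      (ha.norm_add_smul_I_sq_le t)
    nlinarith
  by_contra hy
  have := key ((‖a‖ ^ 2 - x ^ 2 - y ^ 2 + 1) / (2 * y))
  field_simp at this
  linarith

theorem apply_star_mul_self_nonneg_of_norm_apply_le (g : A →ₗ[ℂ] ℂ) (hg : ∀ a, ‖g a‖ ≤ ‖a‖)
    (hg1 : g 1 = 1) (b : A) : 0 ≤ g (star b * b) := by
  let := CStarAlgebra.spectralOrder A
  let := CStarAlgebra.spectralOrderedRing A
  set c := star b * b
  have him : (g c).im = 0 := im_apply_eq_zero_of_isSelfAdjoint g hg hg1 (.star_mul_self b)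
  -- `g c` is real and `|‖c‖ - g c| ≤ ‖‖c‖ - c‖ ≤ ‖c‖`, so `0 ≤ g c`
  have hle : ‖algebraMap ℝ A ‖c‖ - c‖ ≤ ‖c‖ :=
    (CStarAlgebra.norm_le_iff_le_algebraMap _ (norm_nonneg c)
      (sub_nonneg.2 (IsSelfAdjoint.star_mul_self b).le_algebraMap_norm_self)).2
      (sub_le_self _ (star_mul_self_nonneg b))
  have hg_sub : g (algebraMap ℝ A ‖c‖ - c) = ((‖c‖ - (g c).re : ℝ) : ℂ) := by
    apply Complex.ext <;> simp [Algebra.algebraMap_eq_smul_one, hg1, him]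
  have := (hg _).trans hle
  rw [hg_sub, Complex.norm_real, Real.norm_eq_abs] at this
  rw [Complex.nonneg_iff]
  exact ⟨by linarith [le_abs_self (‖c‖ - (g c).re)], him.symm⟩

theorem isCompact_stateSpace : IsCompact (stateSpace A) := by
  refine (isCompact_univ_pi fun a : A => isCompact_closedBall (0 : ℂ) ‖a‖).of_isClosed_subset
    isClosed_stateSpace ?_
  rintro _ ⟨φ, rfl, h1, hpos⟩ a -
  simpa using norm_apply_le_of_map_one φ h1 hpos a

theorem StarSubalgebra.exists_state_extension (S : StarSubalgebra ℂ A) [IsClosed (S : Set A)]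
    (f : S →ₗ[ℂ] ℂ) (hf1 : f 1 = 1) (hf : ∀ x, 0 ≤ f (star x * x)) :
    ∃ ψ ∈ stateSpace A, ∀ x : S, ψ x = f x := by
  obtain ⟨g, hgf, hg⟩ := Module.Dual.exists_extension_of_le_seminorm
    (S.toSubalgebra.toSubmodule) (f ∘ₗ (Subalgebra.toSubmoduleEquiv S.toSubalgebra).toLinearMap)
    (p := normSeminorm ℂ A) fun x => norm_apply_le_of_map_one f hf1 hf _
  have hg1 : g 1 = 1 := (hgf ⟨1, S.one_mem⟩).trans hf1
  exact ⟨g, ⟨g, rfl, hg1, apply_star_mul_self_nonneg_of_norm_apply_le g hg hg1⟩,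
    fun x => hgf ⟨x, x.2⟩⟩

end CStarAlgebra

section Dynamics

variable {A : Type*} [Ring A] [StarRing A] [Algebra ℂ A]

def invariantStateSpace (Φ : A →⋆ₐ[ℂ] A) : Set (A → ℂ) :=
  {ψ | ∃ φ' : A →ₗ[ℂ] ℂ, ψ = ⇑φ' ∧ φ' 1 = 1 ∧
    (∀ a : A, 0 ≤ φ' (star a * a)) ∧ (∀ a : A, φ' (Φ a) = φ' a)}

/-- The states of `A^Φ`. The subtype `{a // Φ a = a}` carries no algebra structure, so linearity,
unitality and positivity are phrased through the underlying elements of `A`. -/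
def fixedPointStateSpace (Φ : A →⋆ₐ[ℂ] A) : Set ({a : A // Φ a = a} → ℂ) :=
  {ψ | (∀ x y z : {a : A // Φ a = a}, z.1 = x.1 + y.1 → ψ z = ψ x + ψ y) ∧
    (∀ (c : ℂ) (x z : {a : A // Φ a = a}), z.1 = c • x.1 → ψ z = c * ψ x) ∧
    (∀ z : {a : A // Φ a = a}, z.1 = 1 → ψ z = 1) ∧
    (∀ x z : {a : A // Φ a = a}, z.1 = star x.1 * x.1 → 0 ≤ ψ z)}

noncomputable def fixedPointRestriction (Φ : A →⋆ₐ[ℂ] A) :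
    (A → ℂ) →ₗ[ℝ] ({a : A // Φ a = a} → ℂ) :=
  LinearMap.funLeft ℝ ℂ Subtype.val

variable (Φ : A →⋆ₐ[ℂ] A)

@[simp]
theorem fixedPointRestriction_apply (ψ : A → ℂ) (z : {a : A // Φ a = a}) :
    fixedPointRestriction Φ ψ z = ψ z.1 :=
  rfl

theorem continuous_fixedPointRestriction : Continuous (fixedPointRestriction Φ) :=
  continuous_pi fun z => continuous_apply z.1

theorem invariantStateSpace_eq :
    invariantStateSpace Φ = stateSpace A ∩ {ψ | ∀ a, ψ (Φ a) = ψ a} := by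
  ext ψ
  constructor
  · rintro ⟨φ, rfl, h1, hpos, hinv⟩
    exact ⟨⟨φ, rfl, h1, hpos⟩, hinv⟩
  · rintro ⟨⟨φ, rfl, h1, hpos⟩, hinv⟩
    exact ⟨φ, rfl, h1, hpos, hinv⟩

theorem invariantStateSpace_subset_stateSpace : invariantStateSpace Φ ⊆ stateSpace A :=
  fun _ ⟨φ, hφ, h1, hpos, _⟩ => ⟨φ, hφ, h1, hpos⟩

theorem mapsTo_fixedPointRestriction :
    MapsTo (fixedPointRestriction Φ) (stateSpace A) (fixedPointStateSpace Φ) := by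
  rintro _ ⟨φ, rfl, h1, hpos⟩
  refine ⟨fun x y z h => ?_, fun c x z h => ?_, fun z h => ?_, fun x z h => ?_⟩ <;>
    simp only [fixedPointRestriction_apply, h, map_add, map_smul, smul_eq_mul, h1, hpos]

end Dynamics

section CStarDynamics

open scoped CStarAlgebra

variable {A : Type*} [CStarAlgebra A] (Φ : A →⋆ₐ[ℂ] A)

theorem exists_mem_stateSpace_fixedPointRestriction_eq {ω : {a : A // Φ a = a} → ℂ}
    (hω : ω ∈ fixedPointStateSpace Φ) :
    ∃ ψ ∈ stateSpace A, fixedPointRestriction Φ ψ = ω := by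
  obtain ⟨hadd, hsmul, hone, hpos⟩ := hω
  let S := StarAlgHom.equalizer Φ (StarAlgHom.id ℂ A)
  have : IsClosed (S : Set A) := isClosed_eq (map_continuous Φ) continuous_id
  let f : S →ₗ[ℂ] ℂ :=
    { toFun x := ω ⟨x, x.2⟩
      map_add' x y := hadd _ _ ⟨(x + y : S), (x + y).2⟩ rfl
      map_smul' c x := hsmul c _ ⟨(c • x : S), (c • x).2⟩ rfl }
  obtain ⟨ψ, hψ, hψf⟩ := S.exists_state_extension f (hone ⟨1, (1 : S).2⟩ rfl)
    fun x => hpos _ ⟨(star x * x : S), (star x * x).2⟩ rfl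
  exact ⟨ψ, hψ, funext fun z => hψf ⟨z.1, z.2⟩⟩

theorem exists_mem_invariantStateSpace_fixedPointRestriction_eq {ω : {a : A // Φ a = a} → ℂ}
    (hω : ω ∈ fixedPointStateSpace Φ) :
    ∃ ψ ∈ invariantStateSpace Φ, fixedPointRestriction Φ ψ = ω := by
  -- an invariant extension of `ω` is a fixed point of `ψ ↦ ψ ∘ Φ` on the extensions of `ω`
  set K := stateSpace A ∩ fixedPointRestriction Φ ⁻¹' {ω}
  have hTK : MapsTo (LinearMap.funLeft ℝ ℂ Φ) K K := fun ψ hψ =>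
    ⟨mapsTo_funLeft_stateSpace Φ hψ.1, by
      rw [← hψ.2]; exact funext fun z => congrArg ψ z.2⟩
  have hK : IsCompact K := isCompact_stateSpace.inter_right
    (isClosed_singleton.preimage (continuous_fixedPointRestriction Φ))
  obtain ⟨ψ, hψK, hψ⟩ := hK.exists_isFixedPt_of_convex
    (convex_stateSpace.inter ((convex_singleton ω).linear_preimage _))
    (exists_mem_stateSpace_fixedPointRestriction_eq Φ hω)
    (LinearMap.funLeft ℝ ℂ Φ) (continuous_pi fun a => continuous_apply (Φ a)) hTK
  exact ⟨ψ, (invariantStateSpace_eq Φ).symm ▸ ⟨hψK.1, fun a => congrFun hψ a⟩, hψK.2⟩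

theorem isCompact_invariantStateSpace : IsCompact (invariantStateSpace Φ) := by
  rw [invariantStateSpace_eq, ofPred_forall]
  exact isCompact_stateSpace.inter_right (isClosed_iInter fun a =>
    isClosed_eq (continuous_apply (Φ a)) (continuous_apply a))

end CStarDynamics

/-- for a C*-dynamical system `(A, Φ)` (with `Φ` a unital *-endomorphism),
every pure state `ω` on the fixed-point subalgebra `A^Φ` extends to an extreme point of
the convex set of `Φ`-invariant states on `A`.  States are encoded as complex-linear,
unital, positive functionals; "pure" means extreme among the states of `A^Φ`. -/
theorem pure_state_on_fixed_points_extends_to_extreme_invariant_state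
    {A : Type} [NormedRing A] [StarRing A] [CStarRing A] [CompleteSpace A]
    [NormedAlgebra ℂ A] [StarModule ℂ A]
    (Φ : A →⋆ₐ[ℂ] A)
    (ω : {a : A // Φ a = a} → ℂ)
    (hω : ω ∈ Set.extremePoints ℝ
      {ψ : {a : A // Φ a = a} → ℂ |
        (∀ x y z : {a : A // Φ a = a}, z.1 = x.1 + y.1 → ψ z = ψ x + ψ y) ∧
        (∀ (c : ℂ) (x z : {a : A // Φ a = a}), z.1 = c • x.1 → ψ z = c * ψ x) ∧
        (∀ z : {a : A // Φ a = a}, z.1 = 1 → ψ z = 1) ∧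
        (∀ x z : {a : A // Φ a = a}, z.1 = star x.1 * x.1 → 0 ≤ ψ z)}) :
    ∃ φ : A →ₗ[ℂ] ℂ,
      (⇑φ) ∈ Set.extremePoints ℝ
        {ψ : A → ℂ | ∃ φ' : A →ₗ[ℂ] ℂ, ψ = ⇑φ' ∧ φ' 1 = 1 ∧
          (∀ a : A, 0 ≤ φ' (star a * a)) ∧ (∀ a : A, φ' (Φ a) = φ' a)} ∧
      ∀ z : {a : A // Φ a = a}, φ z.1 = ω z := by
  let : CStarAlgebra A := {}
  have hface : IsExtreme ℝ (invariantStateSpace Φ)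
      (invariantStateSpace Φ ∩ fixedPointRestriction Φ ⁻¹' {ω}) :=
    isExtreme_inter_preimage_singleton _
      ((mapsTo_fixedPointRestriction Φ).mono_left (invariantStateSpace_subset_stateSpace Φ)) hω
  obtain ⟨e, he⟩ := ((isCompact_invariantStateSpace Φ).inter_right (isClosed_singleton.preimage
    (continuous_fixedPointRestriction Φ))).extremePoints_nonempty
    (exists_mem_invariantStateSpace_fixedPointRestriction_eq Φ hω.1)
  obtain ⟨⟨φ, rfl, -⟩, hφω⟩ := he.1
  exact ⟨φ, hface.extremePoints_subset_extremePoints he, fun z => congrFun hφω z⟩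
end

section
/- For every n ∈ ℕ and i ∈ ℤ there is a sequence of polynomials q_n (independent of i), defined by q_0 = 1, q_1(x) = x, q_{n+1}(x) = x q_n(x) − q_{n−1}(x), such that q_n(X_i)Ω = e_i^{⊗n}, where X_i = A_i + A_i† is the weakly monotone position operator. Consequently, for i_1 > ⋯ > i_k, q_{n_1}(X_{i_1}) ⋯ q_{n_k}(X_{i_k}) Ω = e_{i_1}^{⊗n_1} ⊗ ⋯ ⊗ e_{i_k}^{⊗n_k}, and the vacuum Ω is cyclic for the self-adjoint subalgebra generated by the X_i. -/
open scoped ComplexOrder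

theorem WMIdx.chain_replicate (n : ℕ) (i : ℤ) :
    List.Chain' (· ≥ ·) (List.replicate n i) := by
  induction n with
  | zero => exact List.isChain_nil
  | succ m ih =>
    rw [List.replicate_succ]
    refine List.isChain_cons.mpr ⟨?_, ih⟩
    intro y hy
    cases m with
    | zero => simp at hy
    | succ k =>
      rw [List.replicate_succ, List.head?_cons] at hy
      simp only [Option.mem_def, Option.some.injEq] at hy
      omega

/-!
On `e_i^{⊗n} ⊗ e_l` with every index of `l` below `i`, the annihilator `A_i` only strips
a leading `e_i` (and kills the vector when `n = 0`), so the position operator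
`X_i = A_i + A_i†` acts as the shift `e_i^{⊗n} ↦ e_i^{⊗(n-1)} + e_i^{⊗(n+1)}`. This is the
recurrence of the `q_n`, so `q_n(X_i)` stacks `e_i^{⊗n}` on top of such a vector, and
applying the blocks from the smallest index upwards builds
`e_{i_1}^{⊗n_1} ⊗ ⋯ ⊗ e_{i_k}^{⊗n_k}` from the vacuum. For cyclicity,
`e_i ⊗ e_m = X_i e_m - A_i e_m` where `A_i e_m` is zero or a shorter basis vector, so by
induction on length every basis vector lies in the span of the vacuum orbit.
-/

namespace WMIdx

def tail (l : WMIdx) : WMIdx := ⟨l.1.tail, l.2.tail⟩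

theorem head?_cons (i : ℤ) (l : WMIdx) (h : ok i l) : (cons i l h).1.head? = some i := rfl

@[simp]
theorem tail_cons (i : ℤ) (l : WMIdx) (h : ok i l) : (cons i l h).tail = l := rfl

theorem ok_tail_of_head?_eq {i : ℤ} {l : WMIdx} (hl : l.1.head? = some i) : ok i l.tail := by
  obtain ⟨_ | ⟨j, t⟩, hc⟩ := l
  · simp at hl
  · obtain rfl : j = i := by simpa using hl
    exact (List.isChain_cons.mp hc).1

theorem cons_eq_iff {i : ℤ} {m l : WMIdx} {h : ok i m} :
    cons i m h = l ↔ l.1.head? = some i ∧ m = l.tail := by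
  constructor
  · rintro rfl
    exact ⟨rfl, rfl⟩
  · rintro ⟨hl, rfl⟩
    obtain ⟨_ | ⟨j, t⟩, hc⟩ := l
    · simp at hl
    · obtain rfl : j = i := by simpa using hl
      rfl

theorem eq_vac_or_exists_cons (l : WMIdx) : l = vac ∨ ∃ i m h, l = cons i m h := by
  obtain ⟨_ | ⟨i, t⟩, hc⟩ := l
  · exact Or.inl rfl
  · exact Or.inr ⟨i, ⟨t, hc.tail⟩, (List.isChain_cons.mp hc).1, rfl⟩

theorem length_cons (i : ℤ) (l : WMIdx) (h : ok i l) :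
    (cons i l h).1.length = l.1.length + 1 := rfl

theorem isChain_replicate_append (n : ℕ) {i : ℤ} {l : WMIdx} (h : ok i l) :
    (List.replicate n i ++ l.1).IsChain (· ≥ ·) := by
  refine List.IsChain.append (List.isChain_replicate_of_rel n le_rfl) l.2 fun x hx y hy => ?_
  rw [List.eq_of_mem_replicate (List.mem_of_mem_getLast? hx)]
  exact h y hy

/-- The index of `e_i^{⊗n} ⊗ e_l`. -/
def replicateAppend (n : ℕ) (i : ℤ) (l : WMIdx) (h : ok i l) : WMIdx :=
  ⟨List.replicate n i ++ l.1, isChain_replicate_append n h⟩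

theorem ok_replicateAppend (n : ℕ) {i : ℤ} {l : WMIdx} (h : ok i l) :
    ok i (replicateAppend n i l h) := by
  cases n with
  | zero => simpa [ok, replicateAppend] using h
  | succ n => simp [ok, replicateAppend, List.replicate_succ]

end WMIdx

theorem HilbertBasis.eq_of_forall_inner_eq {ι 𝕜 E : Type*} [RCLike 𝕜] [NormedAddCommGroup E]
    [InnerProductSpace 𝕜 E] (b : HilbertBasis ι 𝕜 E) {x y : E}
    (h : ∀ i, inner 𝕜 (b i) x = inner 𝕜 (b i) y) : x = y :=
  b.repr.injective <| lp.ext <| funext fun i => by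
    simp only [b.repr_apply_apply, h]

theorem Polynomial.aeval_smul_eq_of_recurrence {R A M : Type*} [CommRing R] [Ring A]
    [Algebra R A] [AddCommGroup M] [Module A M] {q : ℕ → Polynomial R} (hq0 : q 0 = 1)
    (hq1 : q 1 = X) (hqrec : ∀ n, q (n + 2) = X * q (n + 1) - q n) {x : A} {v : ℕ → M}
    (hv0 : x • v 0 = v 1) (hv : ∀ n, x • v (n + 1) = v n + v (n + 2)) (n : ℕ) :
    aeval x (q n) • v 0 = v n := by
  induction n using Nat.twoStepInduction with
  | zero => rw [hq0, map_one, one_smul]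
  | one => rw [hq1, aeval_X, hv0]
  | more n ihn ihn1 =>
    rw [hqrec, map_sub, map_mul, aeval_X, sub_smul, mul_smul, ihn1, ihn, hv, add_sub_cancel_left]

theorem ContinuousLinearMap.apply_mem_span_orbit {𝕜 E S : Type*} [Semiring 𝕜]
    [TopologicalSpace E] [AddCommMonoid E] [Module 𝕜 E] [SetLike S (E →L[𝕜] E)]
    [MulMemClass S (E →L[𝕜] E)] {s : S} {T : E →L[𝕜] E} (hT : T ∈ s) {v y : E}
    (hy : y ∈ Submodule.span 𝕜 {y | ∃ U ∈ s, y = U v}) :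
    T y ∈ Submodule.span 𝕜 {y | ∃ U ∈ s, y = U v} := by
  induction hy using Submodule.span_induction with
  | mem y hy =>
    obtain ⟨U, hU, rfl⟩ := hy
    exact Submodule.subset_span ⟨T * U, mul_mem hT hU, rfl⟩
  | zero => simp
  | add y z _ _ hy hz => simpa using add_mem hy hz
  | smul c y _ hy => simpa using Submodule.smul_mem _ c hy

theorem HilbertBasis.topologicalClosure_eq_top_of_range_subset {ι 𝕜 E : Type*} [RCLike 𝕜]
    [NormedAddCommGroup E] [InnerProductSpace 𝕜 E] (b : HilbertBasis ι 𝕜 E)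
    {S : Submodule 𝕜 E} (h : Set.range b ⊆ S) : S.topologicalClosure = ⊤ :=
  eq_top_iff.2 <| b.dense_span.symm.le.trans <|
    Submodule.topologicalClosure_mono (Submodule.span_le.2 h)

section Creation

variable {H : Type} [NormedAddCommGroup H] [InnerProductSpace ℂ H] [CompleteSpace H]
  {b : HilbertBasis WMIdx ℂ H} {C : ℤ → H →L[ℂ] H}
  (hC : ∀ i l (h : WMIdx.ok i l), C i (b l) = b (WMIdx.cons i l h))
  (hC0 : ∀ i l, ¬ WMIdx.ok i l → C i (b l) = 0)
include hC hC0

theorem adjoint_creation_apply_basis (i : ℤ) (l : WMIdx) :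
    ContinuousLinearMap.adjoint (C i) (b l) = if l.1.head? = some i then b l.tail else 0 := by
  classical
  refine b.eq_of_forall_inner_eq fun m => ?_
  rw [ContinuousLinearMap.adjoint_inner_right]
  by_cases hm : WMIdx.ok i m
  · rw [hC i m hm, orthonormal_iff_ite.mp b.orthonormal, WMIdx.cons_eq_iff]
    by_cases hl : l.1.head? = some i
    · rw [if_pos hl, orthonormal_iff_ite.mp b.orthonormal]
      simp only [hl, true_and]
    · rw [if_neg hl, inner_zero_right, if_neg fun h => hl h.1]
  · rw [hC0 i m hm, inner_zero_left]
    split_ifs with hl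
    · rw [orthonormal_iff_ite.mp b.orthonormal, if_neg]
      rintro rfl
      exact hm (WMIdx.ok_tail_of_head?_eq hl)
    · rw [inner_zero_right]

theorem adjoint_creation_apply_basis_cons (i : ℤ) (l : WMIdx) (h : WMIdx.ok i l) :
    ContinuousLinearMap.adjoint (C i) (b (WMIdx.cons i l h)) = b l := by
  rw [adjoint_creation_apply_basis hC hC0, if_pos (WMIdx.head?_cons i l h), WMIdx.tail_cons]

theorem position_apply_basis_of_head?_ne {i : ℤ} {l : WMIdx} (h : WMIdx.ok i l)
    (hne : l.1.head? ≠ some i) :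
    (ContinuousLinearMap.adjoint (C i) + C i) (b l) = b (WMIdx.cons i l h) := by
  rw [add_apply, adjoint_creation_apply_basis hC hC0, if_neg hne, hC, zero_add]

theorem position_apply_basis_replicateAppend_succ {i : ℤ} {l : WMIdx} (h : WMIdx.ok i l)
    (n : ℕ) :
    (ContinuousLinearMap.adjoint (C i) + C i) (b (WMIdx.replicateAppend (n + 1) i l h)) =
      b (WMIdx.replicateAppend n i l h) + b (WMIdx.replicateAppend (n + 2) i l h) := by
  rw [add_apply]
  congr 1
  · exact adjoint_creation_apply_basis_cons hC hC0 i _ (WMIdx.ok_replicateAppend n h)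
  · exact hC i _ (WMIdx.ok_replicateAppend (n + 1) h)

theorem aeval_position_apply_basis {q : ℕ → Polynomial ℂ} (hq0 : q 0 = 1)
    (hq1 : q 1 = Polynomial.X) (hqrec : ∀ n, q (n + 2) = Polynomial.X * q (n + 1) - q n)
    {i : ℤ} {l : WMIdx} (h : WMIdx.ok i l) (hne : l.1.head? ≠ some i) (n : ℕ) :
    Polynomial.aeval (ContinuousLinearMap.adjoint (C i) + C i) (q n) (b l) =
      b (WMIdx.replicateAppend n i l h) :=
  Polynomial.aeval_smul_eq_of_recurrence hq0 hq1 hqrec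
    (x := ContinuousLinearMap.adjoint (C i) + C i)
    (v := fun n => b (WMIdx.replicateAppend n i l h))
    (position_apply_basis_of_head?_ne hC hC0 h hne)
    (position_apply_basis_replicateAppend_succ hC hC0 h) n

theorem prod_aeval_position_apply_vac {q : ℕ → Polynomial ℂ} (hq0 : q 0 = 1)
    (hq1 : q 1 = Polynomial.X) (hqrec : ∀ n, q (n + 2) = Polynomial.X * q (n + 1) - q n)
    (k : ℕ) (i : Fin k → ℤ) (hi : StrictAnti i) (n : Fin k → ℕ) (l : WMIdx)
    (hl : l.1 = (List.ofFn fun a => List.replicate (n a) (i a)).flatten) :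
    (List.ofFn fun a => Polynomial.aeval (ContinuousLinearMap.adjoint (C (i a)) + C (i a))
      (q (n a))).prod (b WMIdx.vac) = b l := by
  induction k generalizing l with
  | zero =>
    obtain rfl : l = WMIdx.vac := Subtype.ext (by simpa [WMIdx.vac] using hl)
    simp
  | succ k ih =>
    rw [List.ofFn_succ, List.flatten_cons] at hl
    set rest := (List.ofFn fun a : Fin k => List.replicate (n a.succ) (i a.succ)).flatten
    have hrest : rest.IsChain (· ≥ ·) := (hl ▸ l.2).right_of_append
    have hlt : ∀ j ∈ rest.head?, j < i 0 := by
      intro j hj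
      obtain ⟨_, hL, hja⟩ := List.mem_flatten.mp (List.mem_of_mem_head? hj)
      obtain ⟨a, rfl⟩ := (List.mem_ofFn' _ _).mp hL
      rw [List.eq_of_mem_replicate hja]
      exact hi (Fin.succ_pos a)
    have hok : WMIdx.ok (i 0) ⟨rest, hrest⟩ := fun j hj => (hlt j hj).le
    have hne : rest.head? ≠ some (i 0) := fun h => (hlt _ h).false
    rw [List.ofFn_succ, List.prod_cons, mul_apply_eq_comp,
      ih (fun a => i a.succ) (hi.comp_strictMono Fin.strictMono_succ) _ ⟨rest, hrest⟩ rfl,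
      aeval_position_apply_basis hC hC0 hq0 hq1 hqrec hok hne]
    exact congrArg b (Subtype.ext hl.symm)

theorem basis_mem_span_position_orbit_vac (l : WMIdx) :
    b l ∈ Submodule.span ℂ {y | ∃ T ∈ StarAlgebra.adjoin ℂ
      (Set.range fun i => ContinuousLinearMap.adjoint (C i) + C i), y = T (b WMIdx.vac)} := by
  set S := StarAlgebra.adjoin ℂ (Set.range fun i => ContinuousLinearMap.adjoint (C i) + C i)
  suffices ∀ n (l : WMIdx), l.1.length ≤ n →
      b l ∈ Submodule.span ℂ {y | ∃ T ∈ S, y = T (b WMIdx.vac)} from this _ l le_rfl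
  intro n
  induction n with
  | zero =>
    intro l hl
    obtain rfl : l = WMIdx.vac := Subtype.ext (List.eq_nil_of_length_eq_zero (Nat.le_zero.mp hl))
    exact Submodule.subset_span ⟨1, one_mem S, rfl⟩
  | succ n ih =>
    intro l hl
    obtain rfl | ⟨i, m, hm, rfl⟩ := l.eq_vac_or_exists_cons
    · exact Submodule.subset_span ⟨1, one_mem S, rfl⟩
    have hmn : m.1.length ≤ n := by simpa [WMIdx.length_cons] using hl
    have hcons : b (WMIdx.cons i m hm) =
        (ContinuousLinearMap.adjoint (C i) + C i) (b m) -
          ContinuousLinearMap.adjoint (C i) (b m) := by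
      rw [add_apply, hC, add_sub_cancel_left]
    rw [hcons]
    refine sub_mem (ContinuousLinearMap.apply_mem_span_orbit
      (StarAlgebra.subset_adjoin ℂ _ (Set.mem_range_self i)) (ih m hmn)) ?_
    rw [adjoint_creation_apply_basis hC hC0]
    split_ifs
    · exact ih _ (by simp only [WMIdx.tail, List.length_tail]; omega)
    · exact zero_mem _

end Creation

/-- the polynomials `q_0 = 1`, `q_1 = X`, `q_{n+2} = X q_{n+1} − q_n`
satisfy `q_n(X_i) Ω = e_i^{⊗n}` for the position operators `X_i = A_i + A_i†`;
consequently `q_{n_1}(X_{i_1}) ⋯ q_{n_k}(X_{i_k}) Ω = e_{i_1}^{⊗n_1} ⊗ ⋯ ⊗ e_{i_k}^{⊗n_k}`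
for `i_1 > ⋯ > i_k`, and the vacuum is cyclic for the unital *-algebra generated by the
`X_i`. -/
theorem wm_vacuum_cyclic_for_positions {H : Type} [NormedAddCommGroup H] [InnerProductSpace ℂ H] [CompleteSpace H]
    (b : HilbertBasis WMIdx ℂ H) (C : ℤ → H →L[ℂ] H)
    (hC : ∀ i l (h : WMIdx.ok i l), C i (b l) = b (WMIdx.cons i l h))
    (hC0 : ∀ i l, ¬ WMIdx.ok i l → C i (b l) = 0)
    (q : ℕ → Polynomial ℂ)
    (hq0 : q 0 = 1) (hq1 : q 1 = Polynomial.X)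
    (hqrec : ∀ n : ℕ, q (n + 2) = Polynomial.X * q (n + 1) - q n) :
    (∀ (n : ℕ) (i : ℤ),
      (Polynomial.aeval (ContinuousLinearMap.adjoint (C i) + C i) (q n)) (b WMIdx.vac)
        = b ⟨List.replicate n i, WMIdx.chain_replicate n i⟩) ∧
    (∀ (k : ℕ) (iIdx : Fin k → ℤ), StrictAnti iIdx → ∀ (npow : Fin k → ℕ) (l : WMIdx),
      l.1 = (List.ofFn fun a : Fin k => List.replicate (npow a) (iIdx a)).flatten →
      ((List.ofFn fun a : Fin k =>
          Polynomial.aeval (ContinuousLinearMap.adjoint (C (iIdx a)) + C (iIdx a))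
            (q (npow a))).prod) (b WMIdx.vac) = b l) ∧
    (Submodule.span ℂ {y : H | ∃ T ∈ StarAlgebra.adjoin ℂ
        (Set.range fun i : ℤ => ContinuousLinearMap.adjoint (C i) + C i),
      y = T (b WMIdx.vac)}).topologicalClosure = ⊤ := by
  refine ⟨fun n i => ?_, prod_aeval_position_apply_vac hC hC0 hq0 hq1 hqrec,
    b.topologicalClosure_eq_top_of_range_subset ?_⟩
  · rw [aeval_position_apply_basis hC hC0 hq0 hq1 hqrec (fun _ h => by cases h)
      (by simp [WMIdx.vac])]
    exact congrArg b (Subtype.ext (List.append_nil _))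
  · rintro _ ⟨l, rfl⟩
    exact basis_mem_span_position_orbit_vac hC hC0 l
end
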